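/- arXiv:1711.08258 — 4 statements merged into one kernel-verified Lean document; each statement's English description precedes it below -/
import Mathlib

section
/- For any support fabric F = (I, H) and any nonempty stratum J ∈ H, the map π_J^# : H' → H from the strata of the blow-up π_J(F) to the strata of F is continuous with respect to the subspace Zariski topologies. -/
open scoped Pointwise

namespace RedSing

/-! ### Vectors and polyhedra.
A vector "in `ℝ^J`" is a function `ℕ → ℝ` supported on the finite set `J`. -/

abbrev Vec : Type := ℕ → ℝ

/-- The cone `ℝ_{≥0}^J` of nonnegative vectors supported on `J`. -/
def suppCone (J : Finset ℕ) : Set Vec :=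
  {σ | (∀ j, 0 ≤ σ j) ∧ ∀ j, j ∉ J → σ j = 0}

/-- Positive convex hull `[[A]] = convexHull (A + ℝ_{≥0}^J)`. -/
noncomputable def posHull (J : Finset ℕ) (A : Set Vec) : Set Vec :=
  convexHull ℝ (A + suppCone J)

/-- The lattice points `(1/d)·ℤ_{≥0}^J`. -/
def latticePts (J : Finset ℕ) (d : ℕ) : Set Vec :=
  {σ | σ ∈ suppCone J ∧ ∀ j, ∃ m : ℕ, σ j = (m : ℝ) / (d : ℝ)}

/-- `Δ ⊆ ℝ_{≥0}^J` is a characteristic polyhedron with denominator `d`. -/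
def IsCharPoly (J : Finset ℕ) (d : ℕ) (Δ : Set Vec) : Prop :=
  ∃ A, A ⊆ latticePts J d ∧ Δ = posHull J A

/-! ### Support fabrics -/

/-- A support fabric: a nonempty finite index set `I` together with a
downward-closed family `H` of subsets of `I` (the strata). -/
structure Fabric where
  I : Finset ℕ
  I_nonempty : I.Nonempty
  H : Set (Finset ℕ)
  mem_sub : ∀ J ∈ H, J ⊆ I
  downward : ∀ J ∈ H, ∀ J' ⊆ J, J' ∈ H

/-- Dimension of a support fabric: the maximal cardinality of a stratum. -/
noncomputable def Fabric.dim (F : Fabric) : ℕ :=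
  sSup {n | ∃ J ∈ F.H, J.card = n}

/-- The Zariski topology on finsets: the open sets are the downward-closed families;
subsets such as the strata set `H` carry the subspace topology. -/
instance zariskiTopology : TopologicalSpace (Finset ℕ) where
  IsOpen U := ∀ J ∈ U, ∀ J' ⊆ J, J' ∈ U
  isOpen_univ := fun J _ J' _ => Set.mem_univ J'
  isOpen_inter := fun s t hs ht J hJ J' hJ' => ⟨hs J hJ.1 J' hJ', ht J hJ.2 J' hJ'⟩
  isOpen_sUnion := fun S hS J hJ J' hJ' => by
    obtain ⟨t, htS, hJt⟩ := hJ
    exact ⟨t, htS, hS t htS J hJt J' hJ'⟩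

/-! ### Polyhedra systems -/

/-- A polyhedra system over a support fabric: a nonempty characteristic polyhedron
with denominator `d` for each stratum, compatible with the projections
(restriction of functions). -/
structure PolySys where
  F : Fabric
  d : ℕ
  d_pos : 0 < d
  Δ : Finset ℕ → Set Vec
  char : ∀ J ∈ F.H, IsCharPoly J d (Δ J)
  nonempty : ∀ J ∈ F.H, (Δ J).Nonempty
  compat : ∀ J₁ ∈ F.H, ∀ J₂ ∈ F.H, J₁ ⊆ J₂ →
    Δ J₁ = (fun σ => fun j => if j ∈ J₁ then σ j else 0) '' Δ J₂

/-- Contact exponent `δ(Δ) = min {|σ| : σ ∈ Δ}` (with the convention `δ = -1`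
for the empty index set). -/
noncomputable def contactExp (J : Finset ℕ) (Δ : Set Vec) : ℝ :=
  if J = (∅ : Finset ℕ) then -1 else sInf ((fun σ => ∑ j ∈ J, σ j) '' Δ)

/-- Singular locus: strata with contact exponent at least 1. -/
def Sing (D : PolySys) : Set (Finset ℕ) :=
  {J | J ∈ D.F.H ∧ 1 ≤ contactExp J (D.Δ J)}

/-- `D` is special: `δ(D) = max {δ(Δ_J)} = 1`. -/
def IsSpecial (D : PolySys) : Prop :=
  (∀ J ∈ D.F.H, contactExp J (D.Δ J) ≤ 1) ∧ ∃ J ∈ D.F.H, contactExp J (D.Δ J) = 1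

/-! ### Blow-ups and transforms -/

/-- The strata of the blow-up centered in `J`, with new index `inf` (playing `∞`). -/
def blowupH (H : Set (Finset ℕ)) (J : Finset ℕ) (inf : ℕ) : Set (Finset ℕ) :=
  {K | K ∈ H ∧ ¬ J ⊆ K} ∪
    {J' | ∃ K, (K ∈ H ∧ J ⊆ K) ∧ ∃ A, A ⊂ J ∧ J' = (K \ J) ∪ A ∪ {inf}}

/-- The map `π_J^#` from the strata of the blow-up to the strata of `F`. -/
def blowdown (J : Finset ℕ) (inf : ℕ) (J' : Finset ℕ) : Finset ℕ :=
  if inf ∈ J' then (J'.erase inf) ∪ J else J'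

/-- The map `λ_{J'} : ℝ^K → ℝ^{J'}`. -/
noncomputable def lamMap (J J' : Finset ℕ) (inf : ℕ) (σ : Vec) : Vec :=
  fun j => if j = inf then ∑ i ∈ J, σ i else if j ∈ J' then σ j else 0

/-- The indicator vector `e_{J',∞}` of the new index. -/
def eVec (inf : ℕ) : Vec := fun j => if j = inf then 1 else 0

/-- The polyhedron `Δ⁰_{J'}` of the total transform at a stratum `J'` of the blow-up. -/
noncomputable def totalΔ (D : PolySys) (J : Finset ℕ) (inf : ℕ) (J' : Finset ℕ) : Set Vec :=
  if inf ∈ J' then posHull J' (lamMap J J' inf '' D.Δ (blowdown J inf J'))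
  else D.Δ J'

/-- The polyhedron `Δ'_{J'} = Δ⁰_{J'} - e_{J',∞}` of the characteristic transform
(`e_{J',∞} = 0` when `∞ ∉ J'`). -/
noncomputable def charΔ (D : PolySys) (J : Finset ℕ) (inf : ℕ) (J' : Finset ℕ) : Set Vec :=
  if inf ∈ J' then
    (fun σ => σ - eVec inf) '' posHull J' (lamMap J J' inf '' D.Δ (blowdown J inf J'))
  else D.Δ J'

/-- `D'` is the total transform `Λ⁰_J(D)` of `D` centered in the nonempty stratum `J`,
with new index `inf`. -/
def IsTotalTransformAt (D D' : PolySys) (J : Finset ℕ) (inf : ℕ) : Prop :=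
  J ∈ D.F.H ∧ J ≠ ∅ ∧ D'.d = D.d ∧ inf ∉ D.F.I ∧
  D'.F.I = insert inf D.F.I ∧ D'.F.H = blowupH D.F.H J inf ∧
  ∀ J' ∈ D'.F.H, D'.Δ J' = totalΔ D J inf J'

/-- `D'` is a total transform of `D` centered in `J`. -/
def IsTotalTransform (D D' : PolySys) (J : Finset ℕ) : Prop :=
  ∃ inf, IsTotalTransformAt D D' J inf

/-- `D'` is the characteristic transform `Λ_J(D)` of `D` centered in the singular
stratum `J`, with new index `inf`. -/
def IsCharTransformAt (D D' : PolySys) (J : Finset ℕ) (inf : ℕ) : Prop :=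
  J ∈ Sing D ∧ D'.d = D.d ∧ inf ∉ D.F.I ∧
  D'.F.I = insert inf D.F.I ∧ D'.F.H = blowupH D.F.H J inf ∧
  ∀ J' ∈ D'.F.H, D'.Δ J' = charΔ D J inf J'

/-- `D'` is a characteristic transform of `D` centered in `J`. -/
def IsCharTransform (D D' : PolySys) (J : Finset ℕ) : Prop :=
  ∃ inf, IsCharTransformAt D D' J inf

/-- A reduction of singularities of `D`: a finite sequence of characteristic
transforms, each centered in a singular stratum of the previous system, ending
in a system with empty singular locus. -/
def HasReduction (D : PolySys) : Prop :=
  ∃ (k : ℕ) (seq : ℕ → PolySys), seq 0 = D ∧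
    (∀ i, i < k → ∃ J, IsCharTransform (seq i) (seq (i + 1)) J) ∧
    Sing (seq k) = ∅

/-! ### Strict tangent space and maximal contact -/

/-- Hironaka's strict tangent space `T(Δ)` of a polyhedron `Δ ⊆ ℝ_{≥0}^J`. -/
def strictTangent (J : Finset ℕ) (Δ : Set Vec) : Set ℕ :=
  {j | ∃ σ ∈ Δ, (∑ i ∈ J, σ i) = 1 ∧ σ j ≠ 0}

/-- The stratum `T` has maximal contact with the (special) system `D`. -/
def HasMaximalContact (D : PolySys) (T : Finset ℕ) : Prop :=
  T ∈ D.F.H ∧ ∀ J ∈ Sing D, (↑T : Set ℕ) ⊆ strictTangent J (D.Δ J)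

/-! ### Hironaka's projection from a stratum `T` -/

/-- Hironaka's projection `∇_J^T(σ) = σ|_{J∖T} / (1 - Σ_{j∈T} σ(j))`. -/
noncomputable def hironakaProj (T J : Finset ℕ) (σ : Vec) : Vec :=
  fun j => if j ∈ J \ T then σ j / (1 - ∑ i ∈ T, σ i) else 0

/-- The polyhedron `Δ^T_{J*} = ∇_J^T(Δ_J ∩ M_J^T)` of Hironaka's projection,
where `J = J* ∪ T`. -/
noncomputable def projΔ (D : PolySys) (T J' : Finset ℕ) : Set Vec :=
  hironakaProj T (J' ∪ T) '' {σ | σ ∈ D.Δ (J' ∪ T) ∧ (∑ i ∈ T, σ i) < 1}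

/-- The strata `H^T = {J ∖ T : T ⊆ J ∈ H}` of the projected fabric `F^T`. -/
def projH (F : Fabric) (T : Finset ℕ) : Set (Finset ℕ) :=
  {J' | ∃ J, (J ∈ F.H ∧ T ⊆ J) ∧ J' = J \ T}

/-- The singular locus of Hironaka's projection `D^T`. -/
def projSing (D : PolySys) (T : Finset ℕ) : Set (Finset ℕ) :=
  {J' | J' ∈ projH D.F T ∧ (projΔ D T J').Nonempty ∧ 1 ≤ contactExp J' (projΔ D T J')}

/-- `E` is Hironaka's projection `D^T` of `D` from the stratum `T`
(a polyhedra system over `F^T` with denominator `d!·d`). -/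
def IsHironakaProjection (D E : PolySys) (T : Finset ℕ) : Prop :=
  E.F.I = D.F.I \ T ∧ E.F.H = projH D.F T ∧ E.d = Nat.factorial D.d * D.d ∧
  ∀ J' ∈ E.F.H, E.Δ J' = projΔ D T J'

/-! ### Reduction `Red_C` of a system to a closed set `C` of strata -/

/-- The fabric `Red_C(F)`, with strata `H_C = ⋃_{J ∈ C} P(J)`. -/
def Fabric.red (F : Fabric) (C : Set (Finset ℕ)) : Fabric where
  I := F.I
  I_nonempty := F.I_nonempty
  H := {J' | ∃ J, (J ∈ C ∧ J ∈ F.H) ∧ J' ⊆ J}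
  mem_sub := by
    rintro J' ⟨J, ⟨_, hJH⟩, hsub⟩
    exact hsub.trans (F.mem_sub J hJH)
  downward := by
    rintro J' ⟨J, hJ, hsub⟩ J'' hsub'
    exact ⟨J, hJ, hsub'.trans hsub⟩

/-- The reduction `Red_C(D)` of a polyhedra system to a closed set `C ⊆ H`. -/
noncomputable def PolySys.red (D : PolySys) (C : Set (Finset ℕ)) : PolySys where
  F := D.F.red C
  d := D.d
  d_pos := D.d_pos
  Δ := D.Δ
  char := by
    rintro J ⟨K, ⟨_, hK⟩, hsub⟩
    exact D.char J (D.F.downward K hK J hsub)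
  nonempty := by
    rintro J ⟨K, ⟨_, hK⟩, hsub⟩
    exact D.nonempty J (D.F.downward K hK J hsub)
  compat := by
    rintro J₁ ⟨K₁, ⟨_, hK₁⟩, h₁⟩ J₂ ⟨K₂, ⟨_, hK₂⟩, h₂⟩ h12
    exact D.compat J₁ (D.F.downward K₁ hK₁ J₁ h₁) J₂ (D.F.downward K₂ hK₂ J₂ h₂) h12

/-- A special polyhedra system is consistent if for each connected component `C`
of its singular locus there is a stratum having maximal contact with `Red_C(D)`
(non-singular systems are consistent by convention). -/
def IsConsistent (D : PolySys) : Prop :=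
  ∀ x ∈ Sing D, ∃ T, HasMaximalContact (D.red (connectedComponentIn (Sing D) x)) T

/-! ### Fitting and Spivakovsky's invariant -/

/-- The fitting vector `w_Δ(j) = min {σ(j) : σ ∈ Δ}`. -/
noncomputable def fitVec (Δ : Set Vec) : Vec := fun j => sInf ((fun σ => σ j) '' Δ)

/-- The fitting `Δ̃ = Δ - w_Δ`. -/
noncomputable def fitting (Δ : Set Vec) : Set Vec := (fun σ => σ - fitVec Δ) '' Δ

/-- Spivakovsky's invariant `Spi_D = max {δ(Δ̃_J) : J ∈ Sing(D)}`. -/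
noncomputable def spi (D : PolySys) : ℝ :=
  sSup {x | ∃ J ∈ Sing D, contactExp J (fitting (D.Δ J)) = x}

/-- `S(D) = {J ∈ Sing(D) : δ(Δ̃_J) = Spi_D}`. -/
def SSet (D : PolySys) : Set (Finset ℕ) :=
  {J | J ∈ Sing D ∧ contactExp J (fitting (D.Δ J)) = spi D}

/-! ### Moderated transforms, normal crossings, quasi-ordinary systems -/

/-- The polyhedron of the `d`-moderated transform `Θ^d_J(N) = N(Λ_J(N/d))`
at a stratum `J'` of the blow-up. -/
noncomputable def modΔ (N : PolySys) (d : ℕ) (J : Finset ℕ) (inf : ℕ) (J' : Finset ℕ) :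
    Set Vec :=
  if inf ∈ J' then
    (fun σ => σ - (d : ℝ) • eVec inf) ''
      posHull J' (lamMap J J' inf '' N.Δ (blowdown J inf J'))
  else N.Δ J'

/-- `N'` is the `d`-moderated transform `Θ^d_J(N)` of the Newton polyhedra system `N`
centered in a stratum `J` with `δ(N_J) ≥ d`, with new index `inf`. -/
def IsModTransformAt (N N' : PolySys) (d : ℕ) (J : Finset ℕ) (inf : ℕ) : Prop :=
  N.d = 1 ∧ N'.d = 1 ∧ J ∈ N.F.H ∧ (d : ℝ) ≤ contactExp J (N.Δ J) ∧ inf ∉ N.F.I ∧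
  N'.F.I = insert inf N.F.I ∧ N'.F.H = blowupH N.F.H J inf ∧
  ∀ J' ∈ N'.F.H, N'.Δ J' = modΔ N d J inf J'

/-- `N'` is a `d`-moderated transform of `N` centered in `J`. -/
def IsModTransform (N N' : PolySys) (d : ℕ) (J : Finset ℕ) : Prop :=
  ∃ inf, IsModTransformAt N N' d J inf

/-- A Newton polyhedra system has normal crossings if each polyhedron has a
single vertex. -/
def HasNormalCrossings (D : PolySys) : Prop :=
  ∀ J ∈ D.F.H, ∃ σ, D.Δ J = posHull J {σ}

/-- `D` is Hironaka quasi-ordinary: each polyhedron over a singular stratum has a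
single vertex. -/
def IsQuasiOrdinary (D : PolySys) : Prop :=
  ∀ J ∈ Sing D, ∃ σ, D.Δ J = posHull J {σ}

/-! ### Lexicographic order on sequences of naturals -/

/-- Strict lexicographic order on sequences `ℕ → ℕ`. -/
def LexLt (φ ψ : ℕ → ℕ) : Prop := ∃ n, φ n < ψ n ∧ ∀ m < n, φ m = ψ m

/-- A weakly decreasing sequence of naturals. -/
def WeaklyDecr (φ : ℕ → ℕ) : Prop := ∀ n, φ (n + 1) ≤ φ n

/-- Zariski-open sets are the down-sets, and preimages of down-sets under a monotone map
are down-sets. -/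
lemma continuous_of_monotone {f : Finset ℕ → Finset ℕ} (hf : Monotone f) : Continuous f :=
  ⟨fun _ hU _ hK _ hK' => hU _ hK _ (hf hK')⟩

lemma blowdown_monotone (J : Finset ℕ) (inf : ℕ) : Monotone (blowdown J inf) := by
  intro K' K h
  unfold blowdown
  split_ifs with h' hK
  · exact Finset.union_subset_union (Finset.erase_subset_erase _ h) le_rfl
  · exact absurd (h h') hK
  · exact fun x hx => Finset.mem_union_left _ (Finset.mem_erase.mpr ⟨fun e => h' (e ▸ hx), h hx⟩)
  · exact h

lemma blowdown_of_notMem {J K : Finset ℕ} {inf : ℕ} (h : inf ∉ K) : blowdown J inf K = K :=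
  if_neg h

lemma blowdown_exceptional {J K A : Finset ℕ} {inf : ℕ} (hJK : J ⊆ K) (hAJ : A ⊆ J)
    (hinf : inf ∉ K) : blowdown J inf (K \ J ∪ A ∪ {inf}) = K := by
  rw [blowdown, if_pos (by simp)]
  ext x
  simp only [Finset.mem_union, Finset.mem_erase, Finset.mem_sdiff, Finset.mem_singleton]
  grind

lemma blowdown_mapsTo (F : Fabric) (J : Finset ℕ) {inf : ℕ} (hinf : inf ∉ F.I) :
    Set.MapsTo (blowdown J inf) (blowupH F.H J inf) F.H := by
  have notMem {K} (hK : K ∈ F.H) : inf ∉ K := fun h => hinf (F.mem_sub K hK h)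
  rintro _ (⟨hK, -⟩ | ⟨K, ⟨hK, hJK⟩, A, hAJ, rfl⟩)
  · rwa [blowdown_of_notMem (notMem hK)]
  · rwa [blowdown_exceptional hJK hAJ.subset (notMem hK)]

theorem blowdown_continuous_general (F : Fabric) (J : Finset ℕ) (inf : ℕ) (hinf : inf ∉ F.I) :
    Set.MapsTo (blowdown J inf) (blowupH F.H J inf) F.H ∧
      ContinuousOn (blowdown J inf) (blowupH F.H J inf) :=
  ⟨blowdown_mapsTo F J hinf, (continuous_of_monotone (blowdown_monotone J inf)).continuousOn⟩

/-- The map `π_J^#` from the strata of the blow-up `π_J(F)` to the strata of `F`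
is continuous for the (subspace) Zariski topologies. -/
theorem blowdown_continuous (F : Fabric) (J : Finset ℕ) (hJ : J ∈ F.H)
    (hJne : J ≠ ∅) (inf : ℕ) (hinf : inf ∉ F.I) :
    Set.MapsTo (blowdown J inf) (blowupH F.H J inf) F.H ∧
      ContinuousOn (blowdown J inf) (blowupH F.H J inf) :=
  blowdown_continuous_general F J inf hinf

end RedSing
end

section
/- CRS(1) holds: every polyhedra system of dimension at most 1 admits a reduction of singularities. -/
open scoped Pointwise

namespace RedSing

/-! In dimension `≤ 1` every singular stratum is a point `{i}`, and its polyhedron is a half-line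
`[m/d, ∞)` on the `i`-axis. Blowing up `{i}` replaces this point by the single new point `{∞}`,
carrying the half-line `[m/d - 1, ∞)`, and leaves the other strata untouched. So the sum over the
points of the integer parts of the contact exponents drops by exactly one at each blow-up. -/

def ray (i : ℕ) (r : ℝ) : Set Vec := {σ | (∀ j ≠ i, σ j = 0) ∧ r ≤ σ i}

lemma ray_eq_image_single (i : ℕ) (r : ℝ) : ray i r = Pi.single i '' Set.Ici r := by
  ext σ
  constructor
  · rintro ⟨hσ, hr⟩
    refine ⟨σ i, hr, funext fun j => ?_⟩
    by_cases hj : j = i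
    · subst hj; simp
    · simp [hj, hσ j hj]
  · rintro ⟨t, ht, rfl⟩
    exact ⟨fun j hj => by simp [hj], by simpa using ht⟩

lemma single_mem_ray {i : ℕ} {r t : ℝ} (h : r ≤ t) : Pi.single i t ∈ ray i r := by
  rw [ray_eq_image_single]
  exact ⟨t, h, rfl⟩

lemma convex_ray (i : ℕ) (r : ℝ) : Convex ℝ (ray i r) := by
  rw [ray_eq_image_single]
  exact (convex_Ici r).linear_image (LinearMap.single ℝ (fun _ => ℝ) i)

lemma posHull_eq_ray {i : ℕ} {r : ℝ} {S : Set Vec} (hS : S ⊆ ray i r)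
    (hr : Pi.single i r ∈ S) : posHull {i} S = ray i r := by
  apply (convexHull_min _ (convex_ray i r)).antisymm
  · intro σ hσ
    apply subset_convexHull
    refine ⟨Pi.single i r, hr, σ - Pi.single i r, ⟨fun j => ?_, fun j hj => ?_⟩, add_sub_cancel _ _⟩
    · by_cases hj : j = i
      · subst hj; simpa using hσ.2
      · simp [hj, hσ.1 j hj]
    · have hj : j ≠ i := by simpa using hj
      simp [hj, hσ.1 j hj]
  · rintro _ ⟨a, ha, c, ⟨hc, hc'⟩, rfl⟩
    refine ⟨fun j hj => ?_, ?_⟩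
    · simp [(hS ha).1 j hj, hc' j (by simpa using hj)]
    · simpa using add_le_add (hS ha).2 (hc i)

lemma isCharPoly_ray (i : ℕ) {d : ℕ} (m : ℕ) : IsCharPoly {i} d (ray i (m / d)) := by
  refine ⟨{Pi.single i ((m : ℝ) / d)}, Set.singleton_subset_iff.mpr ⟨⟨fun j => ?_, fun j hj => ?_⟩,
    fun j => ?_⟩, (posHull_eq_ray (Set.singleton_subset_iff.mpr (single_mem_ray le_rfl)) rfl).symm⟩
  · by_cases hj : j = i
    · subst hj; simp; positivity
    · simp [hj]
  · simp_all
  · by_cases hj : j = i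
    · exact ⟨m, by subst hj; simp⟩
    · exact ⟨0, by simp [hj]⟩

lemma eq_single_of_mem_latticePts {i d : ℕ} {σ : Vec} (hσ : σ ∈ latticePts {i} d) :
    ∃ m : ℕ, σ = Pi.single i ((m : ℝ) / d) := by
  obtain ⟨m, hm⟩ := hσ.2 i
  refine ⟨m, funext fun j => ?_⟩
  by_cases hj : j = i
  · subst hj; simp [hm]
  · simp [hj, hσ.1.2 j (by simpa using hj)]

lemma IsCharPoly.exists_eq_ray {i d : ℕ} {Δ : Set Vec} (h : IsCharPoly {i} d Δ)
    (hne : Δ.Nonempty) : ∃ m : ℕ, Δ = ray i (m / d) := by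
  obtain ⟨A, hA, rfl⟩ := h
  have hA_ne : A.Nonempty := by
    by_contra hA_empty
    simp [Set.not_nonempty_iff_eq_empty.mp hA_empty, posHull] at hne
  have hex : ∃ m : ℕ, Pi.single i ((m : ℝ) / d) ∈ A := by
    obtain ⟨σ, hσ⟩ := hA_ne
    obtain ⟨m, rfl⟩ := eq_single_of_mem_latticePts (hA hσ)
    exact ⟨m, hσ⟩
  classical
  refine ⟨Nat.find hex, posHull_eq_ray (fun σ hσ => ?_) (Nat.find_spec hex)⟩
  obtain ⟨m, rfl⟩ := eq_single_of_mem_latticePts (hA hσ)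
  exact single_mem_ray (by gcongr; exact_mod_cast Nat.find_min' hex hσ)

lemma contactExp_ray (i : ℕ) (r : ℝ) : contactExp {i} (ray i r) = r := by
  rw [contactExp, if_neg (Finset.singleton_ne_empty i), ray_eq_image_single, Set.image_image]
  simp [csInf_Ici]

lemma Fabric.card_le_dim (F : Fabric) {J : Finset ℕ} (hJ : J ∈ F.H) : J.card ≤ F.dim :=
  le_csSup ⟨F.I.card, by rintro _ ⟨K, hK, rfl⟩; exact Finset.card_le_card (F.mem_sub K hK)⟩
    ⟨J, hJ, rfl⟩

lemma eq_singleton_of_card_le_one {K : Finset ℕ} {i : ℕ} (hK : K.card ≤ 1) (hi : i ∈ K) :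
    K = {i} :=
  Finset.eq_singleton_iff_unique_mem.mpr ⟨hi, fun j hj => Finset.card_le_one.mp hK j hj i hi⟩

lemma mem_blowupH_singleton {H : Set (Finset ℕ)} {i inf : ℕ} (hdim : ∀ K ∈ H, K.card ≤ 1)
    (hiH : {i} ∈ H) {K : Finset ℕ} :
    K ∈ blowupH H {i} inf ↔ (K ∈ H ∧ i ∉ K) ∨ K = {inf} := by
  simp only [blowupH, Set.mem_union, Set.mem_ofPred_eq, Finset.singleton_subset_iff]
  constructor
  · rintro (hK | ⟨L, ⟨hLH, hiL⟩, A, hA, rfl⟩)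
    · exact Or.inl hK
    · rw [eq_singleton_of_card_le_one (hdim L hLH) hiL, Finset.eq_empty_of_ssubset_singleton hA]
      simp
  · rintro (hK | rfl)
    · exact Or.inl hK
    · exact Or.inr ⟨{i}, ⟨hiH, Finset.mem_singleton_self i⟩, ∅,
        Finset.empty_ssubset.mpr (Finset.singleton_nonempty i), by simp⟩

lemma lamMap_image_ray {i inf : ℕ} (hne : i ≠ inf) (r : ℝ) :
    lamMap {i} {inf} inf '' ray i r = ray inf r := by
  rw [ray_eq_image_single, ray_eq_image_single, Set.image_image]
  congr 1
  funext t j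
  by_cases hj : j = inf
  · subst hj; simp [lamMap]
  · simp [lamMap, hj]

lemma image_sub_eVec_ray (inf : ℕ) (r : ℝ) :
    (fun σ => σ - eVec inf) '' ray inf r = ray inf (r - 1) := by
  have heVec : eVec inf = Pi.single inf 1 := funext fun j => by simp [eVec, Pi.single_apply]
  rw [ray_eq_image_single, ray_eq_image_single, Set.image_image, ← Set.image_sub_const_Ici,
    Set.image_image, heVec]
  simp_rw [← Pi.single_sub]

lemma restrict_image_ray (i : ℕ) (r : ℝ) :
    (fun σ => fun j => if j ∈ ({i} : Finset ℕ) then σ j else 0) '' ray i r = ray i r :=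
  Set.EqOn.image_eq_self fun σ hσ => funext fun j => by
    by_cases hj : j = i
    · simp [hj]
    · simp [hj, hσ.1 j hj]

lemma restrict_empty_image {S : Set Vec} (hS : S.Nonempty) :
    (fun σ => fun j => if j ∈ (∅ : Finset ℕ) then σ j else 0) '' S = {0} := by
  rw [← hS.image_const (0 : Vec)]
  congr 1

lemma charΔ_of_mem (D : PolySys) (J : Finset ℕ) {inf : ℕ} (hinf : inf ∉ D.F.I) {K : Finset ℕ}
    (hK : K ∈ D.F.H) : charΔ D J inf K = D.Δ K :=
  if_neg fun h => hinf (D.F.mem_sub K hK h)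

lemma charΔ_singleton_new (D : PolySys) {i inf : ℕ} (hiH : {i} ∈ D.F.H) (hinf : inf ∉ D.F.I)
    {r : ℝ} (hΔ : D.Δ {i} = ray i r) : charΔ D {i} inf {inf} = ray inf (r - 1) := by
  have hne : i ≠ inf :=
    ne_of_mem_of_not_mem (D.F.mem_sub {i} hiH (Finset.mem_singleton_self i)) hinf
  have hblowdown : blowdown {i} inf {inf} = {i} := by simp [blowdown]
  rw [charΔ, if_pos (Finset.mem_singleton_self inf), hblowdown, hΔ, lamMap_image_ray hne,
    posHull_eq_ray subset_rfl (single_mem_ray le_rfl), image_sub_eVec_ray]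

def Fabric.blowupAtPoint (F : Fabric) {i : ℕ} (hdim : ∀ K ∈ F.H, K.card ≤ 1) (hiH : {i} ∈ F.H)
    (inf : ℕ) : Fabric where
  I := insert inf F.I
  I_nonempty := Finset.insert_nonempty _ _
  H := blowupH F.H {i} inf
  mem_sub := by
    intro K hK
    rcases (mem_blowupH_singleton hdim hiH).mp hK with ⟨hKH, -⟩ | rfl
    · exact (F.mem_sub K hKH).trans (Finset.subset_insert _ _)
    · simp
  downward := by
    intro K hK L hLK
    rw [mem_blowupH_singleton hdim hiH] at hK ⊢
    rcases hK with ⟨hKH, hiK⟩ | rfl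
    · exact Or.inl ⟨F.downward K hKH L hLK, fun hiL => hiK (hLK hiL)⟩
    · rcases Finset.subset_singleton_iff.mp hLK with rfl | rfl
      · exact Or.inl ⟨F.downward {i} hiH ∅ (Finset.empty_subset _), Finset.notMem_empty i⟩
      · exact Or.inr rfl

lemma Fabric.card_le_one_blowupAtPoint (F : Fabric) {i : ℕ} (hdim : ∀ K ∈ F.H, K.card ≤ 1)
    (hiH : {i} ∈ F.H) (inf : ℕ) : ∀ K ∈ (F.blowupAtPoint hdim hiH inf).H, K.card ≤ 1 := by
  intro K hK
  rcases (mem_blowupH_singleton hdim hiH).mp hK with ⟨hKH, -⟩ | rfl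
  · exact hdim K hKH
  · simp

noncomputable def PolySys.charTransformAtPoint (D : PolySys) {i inf m : ℕ}
    (hdim : ∀ K ∈ D.F.H, K.card ≤ 1) (hiH : {i} ∈ D.F.H) (hinf : inf ∉ D.F.I)
    (hΔi : D.Δ {i} = ray i (m / D.d)) (hm : D.d ≤ m) : PolySys where
  F := D.F.blowupAtPoint hdim hiH inf
  d := D.d
  d_pos := D.d_pos
  Δ := charΔ D {i} inf
  char := by
    intro K hK
    rcases (mem_blowupH_singleton hdim hiH).mp hK with ⟨hKH, -⟩ | rfl
    · rw [charΔ_of_mem D {i} hinf hKH]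
      exact D.char K hKH
    · rw [charΔ_singleton_new D hiH hinf hΔi]
      convert isCharPoly_ray inf (m - D.d) using 2
      have hd : (D.d : ℝ) ≠ 0 := by exact_mod_cast D.d_pos.ne'
      rw [Nat.cast_sub hm, sub_div, div_self hd]
  nonempty := by
    intro K hK
    rcases (mem_blowupH_singleton hdim hiH).mp hK with ⟨hKH, -⟩ | rfl
    · rw [charΔ_of_mem D {i} hinf hKH]
      exact D.nonempty K hKH
    · rw [charΔ_singleton_new D hiH hinf hΔi]
      exact ⟨_, single_mem_ray le_rfl⟩
  compat := by
    intro K₁ _ K₂ hK₂ h12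
    rcases (mem_blowupH_singleton hdim hiH).mp hK₂ with ⟨hK₂H, -⟩ | rfl
    · have hK₁H := D.F.downward K₂ hK₂H K₁ h12
      rw [charΔ_of_mem D {i} hinf hK₁H, charΔ_of_mem D {i} hinf hK₂H]
      exact D.compat K₁ hK₁H K₂ hK₂H h12
    · rw [charΔ_singleton_new D hiH hinf hΔi]
      rcases Finset.subset_singleton_iff.mp h12 with rfl | rfl
      · have hempty : ∅ ∈ D.F.H := D.F.downward {i} hiH ∅ (Finset.empty_subset _)
        rw [charΔ_of_mem D {i} hinf hempty, D.compat ∅ hempty {i} hiH (Finset.empty_subset _),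
          restrict_empty_image (D.nonempty {i} hiH),
          restrict_empty_image ⟨_, single_mem_ray le_rfl⟩]
      · rw [charΔ_singleton_new D hiH hinf hΔi, restrict_image_ray]

open Classical in
noncomputable def pointWeight (D : PolySys) : ℕ :=
  ∑ j ∈ D.F.I with {j} ∈ D.F.H, ⌊contactExp {j} (D.Δ {j})⌋₊

section CharTransformAtPoint

variable {D : PolySys} {i inf m : ℕ} (hdim : ∀ K ∈ D.F.H, K.card ≤ 1) (hiH : {i} ∈ D.F.H)
  (hinf : inf ∉ D.F.I) (hΔi : D.Δ {i} = ray i (m / D.d)) (hm : D.d ≤ m)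

lemma isCharTransformAt_charTransformAtPoint (hiS : {i} ∈ Sing D) :
    IsCharTransformAt D (D.charTransformAtPoint hdim hiH hinf hΔi hm) {i} inf :=
  ⟨hiS, rfl, hinf, rfl, rfl, fun _ _ => rfl⟩

lemma pointWeight_charTransformAtPoint :
    pointWeight (D.charTransformAtPoint hdim hiH hinf hΔi hm) + 1 = pointWeight D := by
  classical
  set D' := D.charTransformAtPoint hdim hiH hinf hΔi hm
  set P := {j ∈ D.F.I | {j} ∈ D.F.H}
  have hiP : i ∈ P :=
    Finset.mem_filter.mpr ⟨D.F.mem_sub {i} hiH (Finset.mem_singleton_self i), hiH⟩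
  have hP' : {j ∈ D'.F.I | {j} ∈ D'.F.H} = insert inf (P.erase i) := by
    ext j
    have hjI : {j} ∈ D.F.H → j ∈ D.F.I := fun h => D.F.mem_sub {j} h (Finset.mem_singleton_self j)
    simp only [Finset.mem_filter, Finset.mem_insert, Finset.mem_erase, P, D',
      PolySys.charTransformAtPoint, Fabric.blowupAtPoint, mem_blowupH_singleton hdim hiH,
      Finset.mem_singleton, Finset.singleton_inj]
    grind
  have hinfP : inf ∉ P.erase i := fun h =>
    hinf (Finset.mem_filter.mp (Finset.mem_of_mem_erase h)).1
  have hold : ∀ j ∈ P.erase i, D'.Δ {j} = D.Δ {j} := fun j hj =>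
    charΔ_of_mem D {i} hinf (Finset.mem_filter.mp (Finset.mem_of_mem_erase hj)).2
  have hnew : D'.Δ {inf} = ray inf (m / D.d - 1) := charΔ_singleton_new D hiH hinf hΔi
  have hδ : 1 ≤ ⌊(m / D.d : ℝ)⌋₊ :=
    Nat.floor_pos.mpr ((one_le_div (Nat.cast_pos.mpr D.d_pos)).mpr (by exact_mod_cast hm))
  rw [pointWeight, hP', Finset.sum_insert hinfP, Finset.sum_congr rfl fun j hj => by rw [hold j hj],
    hnew, contactExp_ray, Nat.floor_sub_one]
  rw [pointWeight, ← Finset.add_sum_erase _ _ hiP, hΔi, contactExp_ray]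
  omega

end CharTransformAtPoint

lemma hasReduction_of_sing_eq_empty {D : PolySys} (hs : Sing D = ∅) : HasReduction D :=
  ⟨0, fun _ => D, rfl, fun _ h => absurd h (Nat.not_lt_zero _), hs⟩

lemma HasReduction.of_isCharTransform {D D' : PolySys} {J : Finset ℕ}
    (h' : HasReduction D') (h : IsCharTransform D D' J) : HasReduction D := by
  obtain ⟨k, seq, rfl, hstep, hend⟩ := h'
  refine ⟨k + 1, fun n => Nat.casesOn n D seq, rfl, fun n hn => ?_, hend⟩
  cases n with
  | zero => exact ⟨J, h⟩
  | succ n => exact hstep n (Nat.lt_of_succ_lt_succ hn)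

lemma exists_eq_singleton_of_mem_sing {D : PolySys} (hdim : ∀ K ∈ D.F.H, K.card ≤ 1)
    {J : Finset ℕ} (hJ : J ∈ Sing D) : ∃ i, J = {i} := by
  have hJ_ne : J.Nonempty := by
    rw [Finset.nonempty_iff_ne_empty]
    rintro rfl
    have := hJ.2
    norm_num [contactExp] at this
  exact Finset.card_eq_one.mp (le_antisymm (hdim J hJ.1) hJ_ne.card_pos)

theorem hasReduction_of_card_le_one (D : PolySys) (hdim : ∀ K ∈ D.F.H, K.card ≤ 1) :
    HasReduction D := by
  by_cases hs : Sing D = ∅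
  · exact hasReduction_of_sing_eq_empty hs
  obtain ⟨J, hJ⟩ := Set.nonempty_iff_ne_empty.mpr hs
  obtain ⟨i, rfl⟩ := exists_eq_singleton_of_mem_sing hdim hJ
  obtain ⟨m, hΔi⟩ := (D.char {i} hJ.1).exists_eq_ray (D.nonempty {i} hJ.1)
  have hm : D.d ≤ m := by
    have hδ := hJ.2
    rw [hΔi, contactExp_ray, one_le_div (Nat.cast_pos.mpr D.d_pos)] at hδ
    exact_mod_cast hδ
  obtain ⟨inf, hinf⟩ := Infinite.exists_notMem_finset D.F.I
  have hweight := pointWeight_charTransformAtPoint hdim hJ.1 hinf hΔi hm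
  exact (hasReduction_of_card_le_one _
    (D.F.card_le_one_blowupAtPoint hdim hJ.1 inf)).of_isCharTransform
    ⟨inf, isCharTransformAt_charTransformAtPoint hdim hJ.1 hinf hΔi hm hJ⟩
termination_by pointWeight D
decreasing_by exact hweight ▸ Nat.lt_add_one _

/-- CRS(1): every polyhedra system of dimension at most 1 admits a reduction of
singularities. -/
theorem crs_one (D : PolySys) (hdim : D.F.dim ≤ 1) : HasReduction D :=
  hasReduction_of_card_le_one D fun _ hK => (D.F.card_le_dim hK).trans hdim

end RedSing
end

section
/- The set of weakly decreasing sequences of natural numbers (functions φ : ℕ → ℕ with φ(n) ≥ φ(n+1) for all n) is well-ordered by the lexicographic order: every weakly decreasing (with respect to the lexicographic order) sequence of such sequences is eventually constant; equivalently, there is no infinite strictly lexicographically decreasing chain of weakly decreasing sequences of natural numbers. -/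
open scoped Pointwise

namespace RedSing

/-! Encode a weakly decreasing `φ` by its conjugate partition `j ↦ #{m | j < φ m} ∈ ℕ∞`, which
is finitely supported. The lexicographic order on such sequences is pulled back from the
colexicographic order on `ℕ →₀ ℕ∞` (the largest differing index decides), which is well-founded:
if `n` is the first index with `φ n < ψ n`, the counts of `φ` and `ψ` agree at every `j ≥ ψ n`,
while at `j = ψ n - 1` the count is at most `n` for `φ` and more than `n` for `ψ`. -/

theorem _root_.WellFounded.eventually_constant_of_rel_or_eq {α : Type*} {r : α → α → Prop}
    (hr : WellFounded r) (x : ℕ → α) (hx : ∀ k, r (x (k + 1)) (x k) ∨ x (k + 1) = x k) :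
    ∃ N, ∀ m, N ≤ m → x m = x N := by
  obtain ⟨_, ⟨N, rfl⟩, hmin⟩ := hr.has_min (Set.range x) (Set.range_nonempty x)
  refine ⟨N, fun m hm => ?_⟩
  induction m, hm using Nat.le_induction with
  | base => rfl
  | succ m _ ih =>
    rcases hx m with hlt | heq
    · exact absurd (ih ▸ hlt) (hmin _ ⟨m + 1, rfl⟩)
    · rw [heq, ih]

theorem setOf_lt_apply_subset_Iio {φ : ℕ → ℕ} (hφ : Antitone φ) {j n : ℕ} (hj : φ n ≤ j) :
    {m | j < φ m} ⊆ Set.Iio n := fun _ hm =>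
  lt_of_not_ge fun hnm => (hm.trans_le (hφ hnm)).not_ge hj

theorem finite_support_encard_setOf_lt {φ : ℕ → ℕ} (hφ : Antitone φ) :
    (Function.support fun j => {m | j < φ m}.encard).Finite := by
  refine (Set.finite_Iio (φ 0)).subset fun j hj => Set.mem_Iio.2 <| lt_of_not_ge fun h0 => hj ?_
  simpa using setOf_lt_apply_subset_Iio hφ (n := 0) h0

noncomputable def conjugatePartition {φ : ℕ → ℕ} (hφ : Antitone φ) : Colex (ℕ →₀ ℕ∞) :=
  toColex (Finsupp.ofSupportFinite _ (finite_support_encard_setOf_lt hφ))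

theorem conjugatePartition_lt_of_lexLt {φ ψ : ℕ → ℕ} (hφ : Antitone φ) (hψ : Antitone ψ)
    (h : LexLt φ ψ) : conjugatePartition hφ < conjugatePartition hψ := by
  obtain ⟨n, hn, heq⟩ := h
  refine Finsupp.Colex.lt_iff.2 ⟨ψ n - 1, fun j hj => ?_, ?_⟩
  · show {m | j < φ m}.encard = {m | j < ψ m}.encard
    refine congrArg Set.encard (Set.ext fun m => ?_)
    by_cases hm : m < n
    · rw [Set.mem_ofPred, Set.mem_ofPred, heq m hm]
    · exact iff_of_false (fun h => hm (setOf_lt_apply_subset_Iio hφ (by omega) h))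
        (fun h => hm (setOf_lt_apply_subset_Iio hψ (by omega) h))
  · show {m | ψ n - 1 < φ m}.encard < {m | ψ n - 1 < ψ m}.encard
    calc {m | ψ n - 1 < φ m}.encard
        ≤ {m | m < n}.encard := Set.encard_le_encard (setOf_lt_apply_subset_Iio hφ (by omega))
      _ < {m | m < n + 1}.encard := by simp only [Set.Nat.encard_range]; norm_cast; omega
      _ ≤ {m | ψ n - 1 < ψ m}.encard := Set.encard_le_encard fun m hm => by
        have := hψ (Nat.lt_succ_iff.1 hm); rw [Set.mem_ofPred]; omega

theorem wellFounded_lexLt_antitone :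
    WellFounded fun φ ψ : {φ : ℕ → ℕ // Antitone φ} => LexLt φ ψ :=
  Subrelation.wf (fun {φ ψ} h => conjugatePartition_lt_of_lexLt φ.2 ψ.2 h)
    (InvImage.wf (fun φ => conjugatePartition φ.2) wellFounded_lt)

/-- The set of weakly decreasing sequences of naturals is well-ordered by the
lexicographic order: every lexicographically weakly decreasing sequence of such
sequences is eventually constant. -/
theorem decreasing_nat_sequences_wellOrdered (f : ℕ → ℕ → ℕ)
    (hdec : ∀ k, WeaklyDecr (f k))
    (hchain : ∀ k, LexLt (f (k + 1)) (f k) ∨ f (k + 1) = f k) :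
    ∃ N, ∀ m, N ≤ m → f m = f N := by
  obtain ⟨N, hN⟩ := wellFounded_lexLt_antitone.eventually_constant_of_rel_or_eq
    (fun k => ⟨f k, antitone_nat_of_succ_le (hdec k)⟩) fun k => (hchain k).imp_right Subtype.ext
  exact ⟨N, fun m hm => congrArg Subtype.val (hN m hm)⟩

end RedSing
end

section
/- Stability of special systems: let D be a special polyhedra system and J ∈ Sing(D). Then δ(Λ_J(D)) ≤ 1; that is, δ(Δ'_{J'}) ≤ 1 for every stratum J' of the characteristic transform Λ_J(D), so Λ_J(D) is either non-singular or special. -/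
open scoped Pointwise

namespace RedSing

/- A new stratum `J' ∋ ∞` of `Λ_J(D)` lies over `K ⊇ J`. For `τ ∈ Δ_K` the point
`λ_{J'}(τ) - e_{J',∞}` of `Δ'_{J'}` has `|·| = Σ_J τ + Σ_{J'∖∞} τ - 1 ≤ 2|τ| - 1`,
because `J` and `J' ∖ {∞}` both lie in `K`; hence `δ(Δ'_{J'}) ≤ 2 δ(Δ_K) - 1 ≤ 1`
when `D` is special.
Old strata keep their polyhedra, so specialness bounds them directly. -/

section Polyhedra

variable {J J' K : Finset ℕ} {inf : ℕ}

lemma posHull_nonneg {A : Set Vec} (hA : ∀ σ ∈ A, ∀ j, 0 ≤ σ j) :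
    ∀ σ ∈ posHull J A, ∀ j, 0 ≤ σ j := by
  have hconv : Convex ℝ {σ : Vec | ∀ j, 0 ≤ σ j} := by
    intro x hx y hy a b ha hb _ j
    have := hx j
    have := hy j
    simp only [Pi.add_apply, Pi.smul_apply, smul_eq_mul]
    positivity
  refine fun σ hσ => convexHull_min ?_ hconv hσ
  rintro _ ⟨a, ha, c, hc, rfl⟩ j
  exact add_nonneg (hA a ha j) (hc.1 j)

lemma subset_posHull (A : Set Vec) : A ⊆ posHull J A :=
  fun σ hσ =>
    subset_convexHull ℝ _ ⟨σ, hσ, 0, ⟨fun _ => le_rfl, fun _ _ => rfl⟩, add_zero σ⟩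

lemma contactExp_le_sum {Δ : Set Vec} {σ : Vec} (hJ : J ≠ ∅)
    (hbdd : BddBelow ((fun σ => ∑ j ∈ J, σ j) '' Δ)) (hσ : σ ∈ Δ) :
    contactExp J Δ ≤ ∑ j ∈ J, σ j := by
  rw [contactExp, if_neg hJ]
  exact csInf_le hbdd ⟨σ, hσ, rfl⟩

lemma sum_sub_eVec (σ : Vec) (hinf : inf ∈ J') :
    ∑ j ∈ J', (σ - eVec inf) j = ∑ j ∈ J', σ j - 1 := by
  simp only [Pi.sub_apply, Finset.sum_sub_distrib, eVec, Finset.sum_ite_eq', if_pos hinf]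

lemma sum_lamMap (τ : Vec) (hinf : inf ∈ J') :
    ∑ j ∈ J', lamMap J J' inf τ j = ∑ i ∈ J, τ i + ∑ j ∈ J'.erase inf, τ j := by
  rw [← Finset.add_sum_erase J' _ hinf]
  congr 1
  · simp [lamMap]
  · refine Finset.sum_congr rfl fun j hj => ?_
    rw [lamMap, if_neg (Finset.ne_of_mem_erase hj), if_pos (Finset.mem_of_mem_erase hj)]

lemma lamMap_nonneg {τ : Vec} (hτ : ∀ j, 0 ≤ τ j) (j : ℕ) : 0 ≤ lamMap J J' inf τ j := by
  unfold lamMap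
  split_ifs
  exacts [Finset.sum_nonneg fun i _ => hτ i, hτ j, le_rfl]

theorem contactExp_charTransform_le {Δ : Set Vec} (hΔ : ∀ σ ∈ Δ, ∀ j, 0 ≤ σ j)
    (hne : Δ.Nonempty) (hK : K ≠ ∅) (hJK : J ⊆ K) (hinf : inf ∈ J')
    (hJ'K : J'.erase inf ⊆ K) :
    contactExp J' ((fun σ => σ - eVec inf) '' posHull J' (lamMap J J' inf '' Δ)) ≤
      2 * contactExp K Δ - 1 := by
  set Δ' := (fun σ => σ - eVec inf) '' posHull J' (lamMap J J' inf '' Δ)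
  have hJ' : J' ≠ ∅ := Finset.nonempty_iff_ne_empty.mp ⟨inf, hinf⟩
  have hbdd : BddBelow ((fun σ => ∑ j ∈ J', σ j) '' Δ') := by
    refine ⟨-1, ?_⟩
    rintro _ ⟨_, ⟨ρ, hρ, rfl⟩, rfl⟩
    have hρ_nonneg := posHull_nonneg
      (by rintro _ ⟨τ, hτ, rfl⟩; exact lamMap_nonneg (hΔ τ hτ)) ρ hρ
    have : 0 ≤ ∑ j ∈ J', ρ j := Finset.sum_nonneg fun j _ => hρ_nonneg j
    simp only [sum_sub_eVec ρ hinf]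
    linarith
  have key : ∀ τ ∈ Δ, contactExp J' Δ' ≤ 2 * ∑ j ∈ K, τ j - 1 := by
    intro τ hτ
    have hmem : lamMap J J' inf τ - eVec inf ∈ Δ' :=
      ⟨_, subset_posHull _ ⟨τ, hτ, rfl⟩, rfl⟩
    have hJ_le : ∑ i ∈ J, τ i ≤ ∑ j ∈ K, τ j :=
      Finset.sum_le_sum_of_subset_of_nonneg hJK fun j _ _ => hΔ τ hτ j
    have hJ'_le : ∑ j ∈ J'.erase inf, τ j ≤ ∑ j ∈ K, τ j :=
      Finset.sum_le_sum_of_subset_of_nonneg hJ'K fun j _ _ => hΔ τ hτ j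
    calc contactExp J' Δ' ≤ ∑ j ∈ J', (lamMap J J' inf τ - eVec inf) j :=
          contactExp_le_sum hJ' hbdd hmem
      _ = ∑ i ∈ J, τ i + ∑ j ∈ J'.erase inf, τ j - 1 := by
          rw [sum_sub_eVec _ hinf, sum_lamMap _ hinf]
      _ ≤ 2 * ∑ j ∈ K, τ j - 1 := by linarith
  have : (contactExp J' Δ' + 1) / 2 ≤ sInf ((fun σ => ∑ j ∈ K, σ j) '' Δ) :=
    le_csInf (hne.image _) (by rintro _ ⟨τ, hτ, rfl⟩; linarith [key τ hτ])
  have hδK : contactExp K Δ = sInf ((fun σ => ∑ j ∈ K, σ j) '' Δ) := if_neg hK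
  linarith

end Polyhedra

lemma PolySys.Δ_nonneg (D : PolySys) {K : Finset ℕ} (hK : K ∈ D.F.H) :
    ∀ σ ∈ D.Δ K, ∀ j, 0 ≤ σ j := by
  obtain ⟨A, hA, hΔ⟩ := D.char K hK
  rw [hΔ]
  exact posHull_nonneg fun σ hσ j => (hA hσ).1.1 j

lemma ne_empty_of_mem_Sing {D : PolySys} {J : Finset ℕ} (hJ : J ∈ Sing D) : J ≠ ∅ := by
  rintro rfl
  have := hJ.2
  rw [contactExp, if_pos rfl] at this
  norm_num at this

section Blowup

variable {J K A : Finset ℕ} {inf : ℕ}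

lemma erase_blowupStratum_subset (hJK : J ⊆ K) (hAJ : A ⊆ J) :
    ((K \ J) ∪ A ∪ {inf}).erase inf ⊆ K := by
  intro j hj
  simp only [Finset.mem_erase, Finset.mem_union, Finset.mem_sdiff, Finset.mem_singleton] at hj
  obtain ⟨hne, (⟨hjK, -⟩ | hjA) | rfl⟩ := hj
  exacts [hjK, hJK (hAJ hjA), absurd rfl hne]

lemma blowdown_blowupStratum (hJK : J ⊆ K) (hAJ : A ⊆ J) (hinf : inf ∉ K) :
    blowdown J inf ((K \ J) ∪ A ∪ {inf}) = K := by
  rw [blowdown, if_pos (by simp)]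
  refine subset_antisymm (Finset.union_subset (erase_blowupStratum_subset hJK hAJ) hJK)
    fun j hjK => ?_
  by_cases hjJ : j ∈ J
  · exact Finset.mem_union_right _ hjJ
  · refine Finset.mem_union_left _ (Finset.mem_erase.mpr ⟨?_, by simp [hjK, hjJ]⟩)
    rintro rfl
    exact hinf hjK

end Blowup

/-- Stability of special systems: if `D` is special and `J ∈ Sing(D)`, then
`δ(Λ_J(D)) ≤ 1`, i.e. every stratum of the characteristic transform has contact
exponent at most 1. -/
theorem special_stability (D D' : PolySys) (hsp : IsSpecial D) (J : Finset ℕ)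
    (h : IsCharTransform D D' J) :
    ∀ J' ∈ D'.F.H, contactExp J' (D'.Δ J') ≤ 1 := by
  obtain ⟨inf, hJ, -, hinfI, -, hH, hΔ⟩ := h
  intro J' hJ'
  rw [hΔ J' hJ', charΔ]
  rw [hH] at hJ'
  rcases hJ' with ⟨hJ'H, -⟩ | ⟨K, ⟨hKH, hJK⟩, A, hAJ, rfl⟩
  · rw [if_neg fun hinf => hinfI (D.F.mem_sub J' hJ'H hinf)]
    exact hsp.1 J' hJ'H
  · have hinfK : inf ∉ K := fun hinf => hinfI (D.F.mem_sub K hKH hinf)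
    have hK : K ≠ ∅ := fun hK =>
      ne_empty_of_mem_Sing hJ (Finset.subset_empty.mp (hK ▸ hJK))
    rw [if_pos (by simp), blowdown_blowupStratum hJK hAJ.subset hinfK]
    calc _ ≤ 2 * contactExp K (D.Δ K) - 1 :=
          contactExp_charTransform_le (D.Δ_nonneg hKH) (D.nonempty K hKH) hK hJK (by simp)
            (erase_blowupStratum_subset hJK hAJ.subset)
      _ ≤ 1 := by linarith [hsp.1 K hKH]

end RedSing
end
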